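/- arXiv:2305.03367 — 2 statements merged into one kernel-verified Lean document; each statement's English description precedes it below -/
import Mathlib

section
/- Let α be a measure on ℝ, B_1,...,B_N disjoint measurable sets with 0 < α(B_k) < ∞, and d_1,...,d_N nonnegative integers summing to m. Define λ_m := κ_{m,0}, i.e., λ_m(d(x_1,...,x_m)) = (α+δ_{x_1}+...+δ_{x_{m-1}})(dx_m)⋯(α+δ_{x_1})(dx_2) α(dx_1). Then ∫ 1_{B_1^{d_1} × ... × B_N^{d_N}} dλ_m = ∏_{k=1}^N (α(B_k))^{(d_k)}, a product of rising factorials. -/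
open Finset MeasureTheory
open scoped ENNReal

/-- The measure `α + δ_{x_1} + ⋯ + δ_{x_j}` attached to a list of already-placed points. -/
noncomputable def stepMeasure (α : Measure ℝ) (l : List ℝ) : Measure ℝ :=
  α + (l.map Measure.dirac).sum

/-- Iterated integral of a product of indicators against the kernel `κ` of the paper:
`kappaInt α l [B_1,…,B_r]` integrates the indicator of `B_1 × ⋯ × B_r` against
`κ_{|l|+r,|l|}(l, ·)`.  With `l = []` this is the integral against
`λ_m = κ_{m,0}`, i.e. `(α+δ_{x_1}+⋯+δ_{x_{m-1}})(dx_m)⋯(α+δ_{x_1})(dx_2)α(dx_1)`. -/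
noncomputable def kappaInt (α : Measure ℝ) : List ℝ → List (Set ℝ) → ℝ≥0∞
  | _, [] => 1
  | l, B :: Bs => ∫⁻ y in B, kappaInt α (l ++ [y]) Bs ∂(stepMeasure α l)

/-- Rising factorial `a(a+1)⋯(a+d-1)` in `ℝ≥0∞`. -/
noncomputable def risingENN (a : ℝ≥0∞) (d : ℕ) : ℝ≥0∞ :=
  ∏ j ∈ Finset.range d, (a + j)

open scoped Classical in
/-- number of elements of the list lying in `S` -/
noncomputable def cntIn (S : Set ℝ) : List ℝ → ℕ
  | [] => 0
  | x :: l => (if x ∈ S then 1 else 0) + cntIn S l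

open scoped Classical in
lemma cntIn_append (S : Set ℝ) (l : List ℝ) (y : ℝ) :
    cntIn S (l ++ [y]) = cntIn S l + (if y ∈ S then 1 else 0) := by
  induction l with
  | nil => simp [cntIn]
  | cons x l ih => simp [cntIn, ih]; omega

lemma stepMeasure_apply (α : Measure ℝ) (S : Set ℝ) (hS : MeasurableSet S) :
    ∀ l : List ℝ, stepMeasure α l S = α S + cntIn S l := by
  classical
  intro l; induction l with
  | nil => simp [stepMeasure, cntIn]
  | cons x l ih =>
    have h : stepMeasure α (x :: l) = stepMeasure α l + Measure.dirac x := by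
      simp only [stepMeasure, List.map_cons, List.sum_cons]
      abel
    rw [h, Measure.add_apply, ih, Measure.dirac_apply' _ hS]
    simp only [cntIn, Set.indicator]
    by_cases hx : x ∈ S <;> simp [hx] <;> push_cast <;> ring

lemma kappaInt_blocks (α : Measure ℝ) (N : ℕ) (B : Fin N → Set ℝ)
    (hmeas : ∀ k, MeasurableSet (B k))
    (hdisj : Pairwise (Function.onFun Disjoint B)) :
    ∀ (L : List (Fin N)) (l : List ℝ),
      kappaInt α l (L.map fun k => B k) =
        ∏ k, ∏ j ∈ Finset.range (L.count k),
          (α (B k) + (cntIn (B k) l : ℝ≥0∞) + (j : ℝ≥0∞)) := by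
  classical
  intro L
  induction L with
  | nil => intro l; simp [kappaInt]
  | cons a L ih =>
    intro l
    rw [List.map_cons]
    show (∫⁻ y in B a, kappaInt α (l ++ [y]) (L.map fun k => B k) ∂(stepMeasure α l)) = _
    have hconst : ∀ y ∈ B a, kappaInt α (l ++ [y]) (L.map fun k => B k)
        = ∏ k, ∏ j ∈ Finset.range (L.count k),
            (α (B k) + ((cntIn (B k) l + if k = a then 1 else 0 : ℕ) : ℝ≥0∞) + (j : ℝ≥0∞)) := by
      intro y hy
      rw [ih]
      refine Finset.prod_congr rfl fun k _ => Finset.prod_congr rfl fun j _ => ?_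
      have hc : cntIn (B k) (l ++ [y]) = cntIn (B k) l + if k = a then 1 else 0 := by
        rw [cntIn_append]
        congr 1
        by_cases hk : k = a
        · subst hk; simp [hy]
        · have hy' : y ∉ B k := fun hyk => Set.disjoint_left.mp (hdisj hk) hyk hy
          simp [hk, hy']
      rw [hc]
    rw [setLIntegral_congr_fun (hmeas a) hconst, setLIntegral_const,
      stepMeasure_apply α (B a) (hmeas a) l]
    have key : ∀ k : Fin N,
        (∏ j ∈ Finset.range ((a :: L).count k),
          (α (B k) + (cntIn (B k) l : ℝ≥0∞) + (j : ℝ≥0∞)))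
        = (∏ j ∈ Finset.range (L.count k),
            (α (B k) + ((cntIn (B k) l + if k = a then 1 else 0 : ℕ) : ℝ≥0∞) + (j : ℝ≥0∞)))
          * (if k = a then α (B k) + (cntIn (B k) l : ℝ≥0∞) else 1) := by
      intro k
      by_cases hk : k = a
      · subst hk
        rw [List.count_cons_self, Finset.prod_range_succ']
        simp only [if_pos rfl]
        congr 1
        · refine Finset.prod_congr rfl fun j _ => ?_
          push_cast
          ring
        · simp
      · rw [List.count_cons_of_ne (Ne.symm hk)]
        simp [hk]
    calc (∏ k, ∏ j ∈ Finset.range (L.count k),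
            (α (B k) + ((cntIn (B k) l + if k = a then 1 else 0 : ℕ) : ℝ≥0∞) + (j : ℝ≥0∞)))
          * (α (B a) + (cntIn (B a) l : ℝ≥0∞))
        = ∏ k, ((∏ j ∈ Finset.range (L.count k),
            (α (B k) + ((cntIn (B k) l + if k = a then 1 else 0 : ℕ) : ℝ≥0∞) + (j : ℝ≥0∞)))
            * (if k = a then α (B k) + (cntIn (B k) l : ℝ≥0∞) else 1)) := by
          rw [Finset.prod_mul_distrib, Finset.prod_ite_eq' Finset.univ a
            (fun k => α (B k) + (cntIn (B k) l : ℝ≥0∞))]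
          simp
      _ = _ := by
          refine (Finset.prod_congr rfl fun k _ => ?_).symm
          exact key k

lemma count_ofFn_eq (m N : ℕ) (β : Fin m → Fin N) (k : Fin N) (d : ℕ)
    (h : ({i : Fin m | β i = k}.ncard) = d) : (List.ofFn β).count k = d := by
  classical
  rw [← h, Set.ncard_eq_toFinset_card']
  rw [← Multiset.coe_count, List.ofFn_eq_map, ← Multiset.map_coe, Multiset.count_map]
  have h2 : (Multiset.ofList (List.finRange m)) = (Finset.univ : Finset (Fin m)).val := by
    simp [Finset.univ, Fintype.elems]
  rw [h2]
  simp [Set.toFinset_setOf, Finset.card_filter, Finset.filter, eq_comm]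

/-- `∫ 1_{B_1^{d_1} × ⋯ × B_N^{d_N}} dλ_m = ∏_k (α(B_k))^{(d_k)}` for
disjoint measurable sets `B_k` with `0 < α(B_k) < ∞` and `d_1+⋯+d_N = m`.  The
rectangle is encoded by a monotone block-assignment `β : Fin m → Fin N` whose fibre
over `k` has `d_k` elements. -/
theorem lambda_m_of_rectangle (α : Measure ℝ) (m N : ℕ)
    (B : Fin N → Set ℝ)
    (hmeas : ∀ k, MeasurableSet (B k))
    (hdisj : Pairwise (Function.onFun Disjoint B))
    (hpos : ∀ k, 0 < α (B k)) (hfin : ∀ k, α (B k) < ⊤)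
    (d : Fin N → ℕ) (hd : ∑ k, d k = m)
    (β : Fin m → Fin N) (hβmono : Monotone β)
    (hβ : ∀ k, ({i : Fin m | β i = k}.ncard) = d k) :
    kappaInt α [] (List.ofFn (fun i => B (β i)))
      = ∏ k, risingENN (α (B k)) (d k) := by
  have h1 : (List.ofFn fun i => B (β i)) = (List.ofFn β).map (fun k => B k) :=
    (List.map_ofFn (f := β) (g := fun k => B k)).symm
  rw [h1, kappaInt_blocks α N B hmeas hdisj]
  refine Finset.prod_congr rfl fun k _ => ?_
  rw [count_ofFn_eq m N β k (d k) (hβ k)]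
  simp [risingENN, cntIn]
end

section
/- Let ζ be a Pascal (negative binomial) point process on ℝ with parameters 0 < p < 1 and intensity parameter measure α (σ-finite). Then for every n ∈ ℕ and every measurable rectangle A = A_1^{d_1} × ... × A_N^{d_N} with A_1,...,A_N pairwise disjoint and d_1+...+d_N = n, the n-th factorial moment measure satisfies E[ζ^{(n)}(A)] = (p/(1−p))^n λ_n(A), where λ_n is the measure with ∫ 1_A dλ_n = ∏_k (α(A_k))^{(d_k)}. -/
open Finset MeasureTheory ProbabilityTheory
open scoped ENNReal

/-- Falling factorial `a(a-1)⋯(a-d+1)` in `ℝ≥0∞` (so that `(∞)_d = ∞` for `d ≥ 1`). -/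
noncomputable def fallingENN (a : ℝ≥0∞) (d : ℕ) : ℝ≥0∞ :=
  ∏ j ∈ Finset.range d, (a - j)

/-- Rising factorial `a(a+1)⋯(a+j-1)` for real `a`. -/
noncomputable def risingReal (a : ℝ) (j : ℕ) : ℝ :=
  ∏ i ∈ Finset.range j, (a + i)

open Filter


lemma risingReal_zero (a : ℝ) : risingReal a 0 = 1 := by simp [risingReal]

lemma risingReal_succ (a : ℝ) (m : ℕ) :
    risingReal a (m + 1) = risingReal a m * (a + m) := Finset.prod_range_succ _ _

lemma risingReal_pos {a : ℝ} (ha : 0 < a) (m : ℕ) : 0 < risingReal a m := by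
  apply Finset.prod_pos
  intro i _
  positivity

lemma risingReal_nonneg {a : ℝ} (ha : 0 ≤ a) (m : ℕ) : 0 ≤ risingReal a m := by
  apply Finset.prod_nonneg
  intro i _
  positivity

lemma risingReal_add (a : ℝ) (d m : ℕ) :
    risingReal a (d + m) = risingReal a d * risingReal (a + d) m := by
  unfold risingReal
  rw [Finset.prod_range_add]
  congr 1
  refine Finset.prod_congr rfl fun i _ => ?_
  push_cast
  ring

lemma tendsto_ratio_aux (b : ℝ) :
    Tendsto (fun n : ℕ => (b + n) / (n + 1)) atTop (nhds 1) := by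
  have h : (fun n : ℕ => (b + n) / (n + 1)) = fun n : ℕ => (b - 1) / ((n : ℝ) + 1) + 1 := by
    funext n
    have : ((n : ℝ) + 1) ≠ 0 := by positivity
    field_simp
    ring
  rw [h]
  have h2 : Tendsto (fun n : ℕ => ((n : ℝ) + 1)) atTop atTop :=
    tendsto_atTop_add_const_right _ 1 tendsto_natCast_atTop_atTop
  simpa using (Tendsto.div_atTop (tendsto_const_nhds (x := b - 1)) h2).add
    (tendsto_const_nhds (x := (1:ℝ)))

lemma summable_aux {r : ℝ} (hr0 : 0 < r) (hr1 : r < 1) (f : ℕ → ℝ) (hf : ∀ n, 0 < f n)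
    (hratio : Tendsto (fun n => f (n + 1) / f n) atTop (nhds 1)) :
    Summable (fun n => f n * r ^ n) := by
  apply summable_of_ratio_test_tendsto_lt_one hr1
  · exact Filter.Eventually.of_forall fun n => (mul_pos (hf n) (pow_pos hr0 n)).ne'
  · have h : (fun n => ‖f (n + 1) * r ^ (n + 1)‖ / ‖f n * r ^ n‖)
        = fun n => f (n + 1) / f n * r := by
      funext n
      rw [Real.norm_of_nonneg (mul_pos (hf (n+1)) (pow_pos hr0 (n+1))).le, Real.norm_of_nonneg
        (le_of_lt (mul_pos (hf n) (pow_pos hr0 n)))]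
      rw [pow_succ]
      have h1 : f n ≠ 0 := (hf n).ne'
      have h2 : r ^ n ≠ 0 := (pow_pos hr0 n).ne'
      field_simp
    rw [h]
    simpa using hratio.mul_const r

/-- Generalized binomial series. -/
lemma nb_hasSum {a x : ℝ} (ha : 0 < a) (hx0 : 0 < x) (hx1 : x < 1) :
    HasSum (fun m : ℕ => risingReal a m / (Nat.factorial m : ℝ) * x ^ m)
      (((1 - x) ^ a)⁻¹) := by
  set c : ℕ → ℝ := fun m => risingReal a m / (Nat.factorial m : ℝ) with hc_def
  have hc_pos : ∀ m, 0 < c m := fun m =>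
    div_pos (risingReal_pos ha m) (by positivity)
  have hc_succ : ∀ m : ℕ, c (m + 1) * (m + 1) = c m * (a + m) := by
    intro m
    simp only [hc_def]
    rw [risingReal_succ, Nat.factorial_succ]
    have h1 : ((Nat.factorial m : ℝ)) ≠ 0 := by positivity
    push_cast
    field_simp
  have hc_ratio : Tendsto (fun m => c (m + 1) / c m) atTop (nhds 1) := by
    have h : (fun m => c (m + 1) / c m) = fun m : ℕ => (a + m) / (m + 1) := by
      funext m
      have h1 := hc_succ m
      have h2 : c m ≠ 0 := (hc_pos m).ne'
      have h3 : ((m : ℝ) + 1) ≠ 0 := by positivity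
      field_simp
      linarith [h1]
    rw [h]
    exact tendsto_ratio_aux a
  have hsum : ∀ r : ℝ, 0 < r → r < 1 → Summable (fun m => c m * r ^ m) := fun r h0 h1 =>
    summable_aux h0 h1 c hc_pos hc_ratio
  -- the "e" sequence: e m = c m * (a + m) = (m+1) * c (m+1)
  set e : ℕ → ℝ := fun m => c m * (a + m) with he_def
  have he_pos : ∀ m, 0 < e m := fun m => mul_pos (hc_pos m) (by positivity)
  have he_ratio : Tendsto (fun m => e (m + 1) / e m) atTop (nhds 1) := by
    have h : (fun m => e (m + 1) / e m) = fun m : ℕ => (a + 1 + m) / (m + 1) := by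
      funext m
      have h1 := hc_succ m
      have h2 : c m ≠ 0 := (hc_pos m).ne'
      have h3 : ((m : ℝ) + 1) ≠ 0 := by positivity
      have h4 : a + (m : ℝ) ≠ 0 := by positivity
      simp only [he_def]
      push_cast
      rw [div_eq_div_iff (by positivity) h3]
      nlinarith [h1]
    rw [h]
    exact tendsto_ratio_aux (a + 1)
  -- radius R with x < R < 1
  set R : ℝ := (1 + x) / 2 with hR_def
  have hxR : x < R := by simp only [hR_def]; linarith
  have hR1 : R < 1 := by simp only [hR_def]; linarith
  have hR0 : 0 < R := by simp only [hR_def]; linarith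
  set t : Set ℝ := Set.Ioo (-R) R with ht_def
  have ht_open : IsOpen t := isOpen_Ioo
  have ht_conn : IsPreconnected t := (convex_Ioo _ _).isPreconnected
  have hxt : x ∈ t := ⟨by linarith, hxR⟩
  -- the series and bounds
  set u : ℕ → ℝ := fun n => e n * R ^ n / R with hu_def
  have hu_sum : Summable u := (summable_aux hR0 hR1 e he_pos he_ratio).div_const R
  set g : ℕ → ℝ → ℝ := fun n y => c n * y ^ n with hg_def
  set g' : ℕ → ℝ → ℝ := fun n y => c n * (n * y ^ (n - 1)) with hg'_def
  have hg : ∀ n y, y ∈ t → HasDerivAt (g n) (g' n y) y := fun n y _ =>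
    (hasDerivAt_pow n y).const_mul (c n)
  have hbound : ∀ n y, y ∈ t → ‖g' n y‖ ≤ u n := by
    intro n y hy
    have hy' : |y| ≤ R := le_of_lt (abs_lt.2 ⟨hy.1, hy.2⟩)
    have h1 : ‖g' n y‖ = c n * (n * |y| ^ (n - 1)) := by
      simp only [hg'_def]
      rw [norm_mul, norm_mul, Real.norm_of_nonneg (hc_pos n).le,
        Real.norm_of_nonneg (by positivity : (0:ℝ) ≤ (n:ℝ)), norm_pow, Real.norm_eq_abs]
    rw [h1]
    have h2 : |y| ^ (n - 1) ≤ R ^ (n - 1) := pow_le_pow_left₀ (abs_nonneg y) hy' _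
    have h3 : R ^ (n - 1) ≤ R ^ n / R := by
      cases n with
      | zero => simp only [Nat.zero_sub, pow_zero]
                rw [le_div_iff₀ hR0]; simpa using hR1.le
      | succ m => simp only [Nat.succ_sub_one, pow_succ]
                  rw [mul_div_assoc, div_self hR0.ne', mul_one]
    have h4 : (n : ℝ) ≤ a + n := by linarith
    calc c n * ((n : ℝ) * |y| ^ (n - 1)) ≤ c n * ((a + n) * (R ^ n / R)) := by
          apply mul_le_mul_of_nonneg_left _ (hc_pos n).le
          apply mul_le_mul h4 (h2.trans h3) (by positivity) (by positivity)
      _ = u n := by simp only [hu_def, he_def]; ring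
  have hg0 : Summable fun n => g n x := hsum x hx0 hx1
  -- derivative of the sum
  set S : ℝ → ℝ := fun z => ∑' n, g n z with hS_def
  set D : ℝ → ℝ := fun y => ∑' n, g' n y with hD_def
  have hSderiv : ∀ y ∈ t, HasDerivAt S (D y) y := fun y hy =>
    hasDerivAt_tsum_of_isPreconnected hu_sum ht_open ht_conn hg hbound hxt hg0 hy
  -- the ODE identity at points of Ioo 0 x
  have hid : ∀ y, 0 < y → y < x → (1 - y) * D y = a * S y := by
    intro y hy0 hyx
    have hyt : y ∈ t := ⟨by linarith, by linarith⟩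
    have hy1 : y < 1 := lt_trans hyx hx1
    have h1 : Summable (fun n => g' n y) :=
      Summable.of_norm_bounded hu_sum (fun n => hbound n y hyt)
    have hshift : D y = ∑' m, g' (m + 1) y := by
      simp only [hD_def]
      rw [Summable.tsum_eq_zero_add h1]
      simp [hg'_def]
    have hterm : ∀ m : ℕ, g' (m + 1) y = a * g m y + y * g' m y := by
      intro m
      have h1 := hc_succ m
      simp only [hg'_def, hg_def, Nat.add_sub_cancel]
      cases m with
      | zero =>
          push_cast at h1 ⊢
          norm_num
          linear_combination h1
      | succ k =>
          simp only [Nat.add_sub_cancel]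
          push_cast at h1 ⊢
          linear_combination (y ^ (k + 1)) * h1
    have hsum_g : Summable (fun m => g m y) := hsum y hy0 hy1
    have hsum_yg' : Summable (fun m => y * g' m y) := h1.mul_left y
    have hD_eq : D y = a * S y + y * D y := by
      refine hshift.trans ?_
      calc ∑' m, g' (m + 1) y = ∑' m, (a * g m y + y * g' m y) := tsum_congr hterm
        _ = (∑' m, a * g m y) + ∑' m, y * g' m y :=
              Summable.tsum_add (hsum_g.mul_left a) hsum_yg'
        _ = a * S y + y * D y := by rw [tsum_mul_left, tsum_mul_left]
    linear_combination hD_eq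
  -- the auxiliary function F and its vanishing derivative
  set F : ℝ → ℝ := fun z => S z * (1 - z) ^ a with hF_def
  have hFderiv : ∀ y ∈ t, (1:ℝ) - y ≠ 0 → HasDerivAt F
      (D y * (1 - y) ^ a + S y * ((-1) * a * (1 - y) ^ (a - 1))) y := by
    intro y hyt hy1
    have h2 : HasDerivAt (fun z : ℝ => 1 - z) (-1) y := by
      simpa using (hasDerivAt_id y).const_sub 1
    have h3 : HasDerivAt (fun z : ℝ => (1 - z) ^ a)
        ((-1) * a * (1 - y) ^ (a - 1)) y := h2.rpow_const (Or.inl hy1)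
    exact (hSderiv y hyt).mul h3
  have hsub : Set.Icc (0:ℝ) x ⊆ t := fun y hy =>
    ⟨lt_of_lt_of_le (by linarith) hy.1, lt_of_le_of_lt hy.2 hxR⟩
  have hcont : ContinuousOn F (Set.Icc 0 x) := by
    intro y hy
    have hy1 : y < 1 := lt_of_le_of_lt hy.2 hx1
    exact (hFderiv y (hsub hy) (by linarith)).continuousAt.continuousWithinAt
  have hderiv0 : ∀ y ∈ Set.Ioo (0:ℝ) x, HasDerivAt F 0 y := by
    intro y hy
    have hy1 : y < 1 := lt_trans hy.2 hx1
    have h1 : (1:ℝ) - y ≠ 0 := by linarith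
    have hD := hFderiv y (hsub ⟨hy.1.le, hy.2.le⟩) h1
    have hidy := hid y hy.1 hy.2
    have hpos : (0:ℝ) < 1 - y := by linarith
    have hsplit : (1 - y) ^ a = (1 - y) ^ (a - 1) * (1 - y) := by
      calc (1 - y) ^ a = (1 - y) ^ (a - 1 + 1) := by ring_nf
        _ = (1 - y) ^ (a - 1) * (1 - y) ^ (1:ℝ) := Real.rpow_add hpos _ _
        _ = (1 - y) ^ (a - 1) * (1 - y) := by rw [Real.rpow_one]
    have hz : D y * (1 - y) ^ a + S y * ((-1) * a * (1 - y) ^ (a - 1)) = 0 := by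
      rw [hsplit]
      linear_combination ((1 - y) ^ (a - 1)) * hidy
    rwa [hz] at hD
  obtain ⟨cpt, hcpt, hslope⟩ := exists_hasDerivAt_eq_slope F (fun _ => 0) hx0 hcont hderiv0
  have hFx : F x = F 0 := by
    have h2 : (0:ℝ) = (F x - F 0) / (x - 0) := hslope
    have h3 : x - 0 ≠ 0 := by linarith
    field_simp at h2
    linarith [h2]
  have hS0 : S 0 = 1 := by
    have h1 : S 0 = g 0 0 := tsum_eq_single 0 (by
      intro n hn
      simp [hg_def, zero_pow hn])
    rw [h1]
    simp [hg_def, hc_def, risingReal_zero]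
  have hF0 : F 0 = 1 := by
    simp only [hF_def, hS0, sub_zero, Real.one_rpow, one_mul]
  have hSx : S x * (1 - x) ^ a = 1 := by
    rw [hF0] at hFx
    simpa only [hF_def] using hFx
  have hpow : (1 - x) ^ a ≠ 0 := (Real.rpow_pos_of_pos (by linarith) a).ne'
  have hfinal : S x = ((1 - x) ^ a)⁻¹ := by
    field_simp
    linarith [hSx]
  exact (Summable.hasSum_iff hg0).2 hfinal


lemma measurable_fallingENN (d : ℕ) : Measurable fun a : ℝ≥0∞ => fallingENN a d := by
  unfold fallingENN
  exact Finset.measurable_prod _ fun j _ => measurable_id.sub measurable_const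

lemma fallingENN_zero_arg {d : ℕ} (hd : d ≠ 0) : fallingENN 0 d = 0 := by
  apply Finset.prod_eq_zero (Finset.mem_range.2 (Nat.pos_of_ne_zero hd))
  simp

lemma risingENN_zero_arg {d : ℕ} (hd : d ≠ 0) : risingENN 0 d = 0 := by
  apply Finset.prod_eq_zero (Finset.mem_range.2 (Nat.pos_of_ne_zero hd))
  simp

lemma fallingENN_top {d : ℕ} (hd : d ≠ 0) : fallingENN ⊤ d = ⊤ := by
  unfold fallingENN
  have h : ∀ j ∈ Finset.range d, (⊤ : ℝ≥0∞) - (j : ℝ≥0∞) = ⊤ := by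
    intro j _
    simp [ENNReal.top_sub (ENNReal.natCast_ne_top j)]
  rw [Finset.prod_congr rfl h, Finset.prod_const]
  exact ENNReal.top_pow (by simpa using hd)

lemma risingENN_top {d : ℕ} (hd : d ≠ 0) : risingENN ⊤ d = ⊤ := by
  unfold risingENN
  have h : ∀ j ∈ Finset.range d, (⊤ : ℝ≥0∞) + (j : ℝ≥0∞) = ⊤ := by
    intro j _
    simp
  rw [Finset.prod_congr rfl h, Finset.prod_const]
  exact ENNReal.top_pow (by simpa using hd)

lemma fallingENN_natCast (k d : ℕ) :
    fallingENN (k : ℝ≥0∞) d = (Nat.descFactorial k d : ℝ≥0∞) := by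
  rw [Nat.descFactorial_eq_prod_range, Nat.cast_prod]
  exact Finset.prod_congr rfl fun j _ => (ENNReal.natCast_sub k j).symm

lemma risingENN_ofReal {a : ℝ} (ha : 0 ≤ a) (d : ℕ) :
    risingENN (ENNReal.ofReal a) d = ENNReal.ofReal (risingReal a d) := by
  induction d with
  | zero => simp [risingENN, risingReal]
  | succ m ih =>
      rw [risingENN, Finset.prod_range_succ, ← risingENN, ih, risingReal_succ,
        ENNReal.ofReal_mul (risingReal_nonneg ha m), ENNReal.ofReal_add ha (by positivity),
        ENNReal.ofReal_natCast]

lemma nb_lintegral_falling {Ω : Type*} [MeasurableSpace Ω] (P : Measure Ω)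
    [IsProbabilityMeasure P] {p : ℝ} (hp0 : 0 < p) (hp1 : p < 1)
    {X : Ω → ℝ≥0∞} (hX : Measurable X) {a : ℝ} (ha : 0 < a)
    (hlaw : ∀ k : ℕ, P {ω | X ω = k} = ENNReal.ofReal
      (risingReal a k * p ^ k * (1 - p) ^ a / (Nat.factorial k : ℝ))) (d : ℕ) :
    ∫⁻ ω, fallingENN (X ω) d ∂P
      = ENNReal.ofReal (p / (1 - p)) ^ d * ENNReal.ofReal (risingReal a d) := by
  have hq : 0 < 1 - p := by linarith
  set rl : ℕ → ℝ := fun k => risingReal a k * p ^ k * (1 - p) ^ a / (Nat.factorial k : ℝ)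
    with hrl_def
  have hrl_nonneg : ∀ k, 0 ≤ rl k := by
    intro k
    apply div_nonneg _ (Nat.cast_nonneg _)
    exact mul_nonneg (mul_nonneg (risingReal_nonneg ha.le k) (pow_nonneg hp0.le k))
      (Real.rpow_nonneg hq.le a)
  have hB := nb_hasSum ha hp0 hp1
  have hrl_eq : rl = fun k => (risingReal a k / (Nat.factorial k : ℝ) * p ^ k) * (1 - p) ^ a := by
    funext k
    simp only [hrl_def]
    ring
  have hrl_sum : Summable rl := by
    rw [hrl_eq]
    exact hB.summable.mul_right _
  have hrl_tsum : ∑' k, rl k = 1 := by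
    rw [hrl_eq, tsum_mul_right, hB.tsum_eq]
    exact inv_mul_cancel₀ (Real.rpow_pos_of_pos hq a).ne'
  -- the partition sets
  set s : ℕ → Set Ω := fun k => {ω | X ω = (k : ℝ≥0∞)} with hs_def
  have hs_meas : ∀ k, MeasurableSet (s k) := fun k => hX (measurableSet_singleton _)
  have hs_disj : Pairwise (Function.onFun Disjoint s) := by
    intro i j hij
    simp only [Function.onFun]
    rw [Set.disjoint_left]
    intro ω h1 h2
    exact hij (Nat.cast_injective ((h1 : X ω = _).symm.trans (h2 : X ω = _)))
  have hs_P : ∀ k, P (s k) = ENNReal.ofReal (rl k) := fun k => hlaw k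
  have hU : P (⋃ k, s k) = 1 := by
    rw [measure_iUnion hs_disj hs_meas]
    calc ∑' k, P (s k) = ∑' k, ENNReal.ofReal (rl k) := tsum_congr hs_P
      _ = ENNReal.ofReal (∑' k, rl k) := (ENNReal.ofReal_tsum_of_nonneg hrl_nonneg hrl_sum).symm
      _ = 1 := by rw [hrl_tsum, ENNReal.ofReal_one]
  have hUc : P ((⋃ k, s k)ᶜ) = 0 := by
    rw [measure_compl (MeasurableSet.iUnion hs_meas) (measure_ne_top P _), hU, measure_univ,
      tsub_self]
  -- decompose the integral
  have hdecomp : ∫⁻ ω, fallingENN (X ω) d ∂P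
      = ∑' k, ∫⁻ ω in s k, fallingENN (X ω) d ∂P := by
    rw [← lintegral_add_compl (fun ω => fallingENN (X ω) d) (MeasurableSet.iUnion hs_meas),
      setLIntegral_measure_zero _ _ hUc, add_zero, lintegral_iUnion hs_meas hs_disj]
  have hpiece : ∀ k, ∫⁻ ω in s k, fallingENN (X ω) d ∂P
      = ENNReal.ofReal ((Nat.descFactorial k d : ℝ) * rl k) := by
    intro k
    have h1 : ∀ ω ∈ s k, fallingENN (X ω) d = (Nat.descFactorial k d : ℝ≥0∞) := by
      intro ω hω
      rw [(hω : X ω = (k : ℝ≥0∞)), fallingENN_natCast]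
    rw [setLIntegral_congr_fun (hs_meas k) (fun ω hω => h1 ω hω),
      setLIntegral_const, hs_P k, ← ENNReal.ofReal_natCast,
      ← ENNReal.ofReal_mul (Nat.cast_nonneg _)]
  -- the series
  set tk : ℕ → ℝ := fun k => (Nat.descFactorial k d : ℝ) * rl k with htk_def
  have htk_nonneg : ∀ k, 0 ≤ tk k := fun k => mul_nonneg (Nat.cast_nonneg _) (hrl_nonneg k)
  have had : 0 < a + d := by positivity
  have hB2 := nb_hasSum had hp0 hp1
  set C : ℝ := risingReal a d * p ^ d * (1 - p) ^ a with hC_def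
  have htk_shift : ∀ m : ℕ, tk (m + d)
      = C * (risingReal (a + d) m / (Nat.factorial m : ℝ) * p ^ m) := by
    intro m
    have hfac : ((m + d).factorial : ℝ)
        = (Nat.factorial m : ℝ) * ((m + d).descFactorial d : ℝ) := by
      rw [← Nat.cast_mul]
      congr 1
      have h := Nat.factorial_mul_descFactorial (Nat.le_add_left d m)
      rw [Nat.add_sub_cancel] at h
      exact h.symm
    have hrise : risingReal a (m + d) = risingReal a d * risingReal (a + d) m := by
      rw [add_comm m d, risingReal_add]
    have hdpos : (0:ℝ) < ((m + d).descFactorial d : ℝ) := by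
      have h : (m + d).descFactorial d ≠ 0 := by
        rw [Ne, Nat.descFactorial_eq_zero_iff_lt]
        omega
      exact_mod_cast Nat.pos_of_ne_zero h
    simp only [htk_def, hrl_def, hC_def]
    rw [hfac, hrise, pow_add]
    have hm : ((Nat.factorial m : ℝ)) ≠ 0 := by positivity
    field_simp
  have hinj : Function.Injective (fun m : ℕ => m + d) := add_left_injective d
  have hsupp : Function.support tk ⊆ Set.range (fun m : ℕ => m + d) := by
    intro k hk
    by_contra hnot
    apply hk
    have hkd : k < d := by
      by_contra hge
      exact hnot ⟨k - d, Nat.sub_add_cancel (not_lt.1 hge)⟩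
    simp only [htk_def]
    rw [Nat.descFactorial_eq_zero_iff_lt.2 hkd]
    simp
  have htk_sum : Summable tk := by
    rw [← Function.Injective.summable_iff hinj (Function.support_subset_iff'.1 hsupp)]
    have : (tk ∘ fun m : ℕ => m + d)
        = fun m => C * (risingReal (a + d) m / (Nat.factorial m : ℝ) * p ^ m) := by
      funext m
      exact htk_shift m
    rw [this]
    exact hB2.summable.mul_left C
  have htk_tsum : ∑' k, tk k = (p / (1 - p)) ^ d * risingReal a d := by
    rw [← Function.Injective.tsum_eq hinj hsupp]
    calc ∑' m, tk (m + d)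
        = ∑' m, C * (risingReal (a + d) m / (Nat.factorial m : ℝ) * p ^ m) :=
          tsum_congr htk_shift
      _ = C * (((1 - p) ^ (a + (d:ℝ)))⁻¹) := by
          rw [tsum_mul_left]
          congr 1
          exact hB2.tsum_eq
      _ = (p / (1 - p)) ^ d * risingReal a d := by
          rw [Real.rpow_add hq, Real.rpow_natCast, div_pow]
          simp only [hC_def]
          have h1 : (1 - p) ^ a ≠ 0 := (Real.rpow_pos_of_pos hq a).ne'
          have h2 : (1 - p) ^ d ≠ 0 := pow_ne_zero d hq.ne'
          field_simp
  -- put everything together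
  rw [hdecomp]
  calc ∑' k, ∫⁻ ω in s k, fallingENN (X ω) d ∂P
      = ∑' k, ENNReal.ofReal (tk k) := tsum_congr hpiece
    _ = ENNReal.ofReal (∑' k, tk k) := (ENNReal.ofReal_tsum_of_nonneg htk_nonneg htk_sum).symm
    _ = ENNReal.ofReal (p / (1 - p)) ^ d * ENNReal.ofReal (risingReal a d) := by
        rw [htk_tsum, ENNReal.ofReal_mul (by positivity), ENNReal.ofReal_pow (by positivity)]

lemma indep_lintegral_prod {Ω ι : Type*} [MeasurableSpace Ω] {P : Measure Ω}
    [IsProbabilityMeasure P] {f : ι → Ω → ℝ≥0∞} (hf : ∀ i, Measurable (f i))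
    (hindep : iIndepFun f P)
    (s : Finset ι) :
    ∫⁻ ω, ∏ j ∈ s, f j ω ∂P = ∏ j ∈ s, ∫⁻ ω, f j ω ∂P := by
  classical
  induction s using Finset.induction with
  | empty => simp
  | insert i s hnotmem ih =>
      have hprod_eq : (∏ j ∈ s, f j) = fun ω => ∏ j ∈ s, f j ω := by
        funext ω
        simp
      have hIndep2 : IndepFun (f i) (∏ j ∈ s, f j) P :=
        (hindep.indepFun_finsetProd_of_notMem hf hnotmem).symm
      have hmeas_prod : Measurable (∏ j ∈ s, f j) := by
        rw [hprod_eq]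
        exact Finset.measurable_prod s fun j _ => hf j
      have hmul := lintegral_mul_eq_lintegral_mul_lintegral_of_indepFun
        (hf i) hmeas_prod hIndep2
      simp only [Pi.mul_apply, hprod_eq] at hmul
      rw [Finset.prod_insert hnotmem, ← ih]
      simp only [Finset.prod_insert hnotmem]
      exact hmul

/-- for a Pascal (negative binomial) point process `ζ` with parameters
`0 < p < 1` and σ-finite intensity parameter measure `α`, the `n`-th factorial moment
measure of a rectangle `A_1^{d_1} × ⋯ × A_N^{d_N}` with pairwise disjoint `A_j` and
`d_1+⋯+d_N = n` is `E[∏_j (ζ(A_j))_{d_j}] = (p/(1-p))^n ∏_j (α(A_j))^{(d_j)}`.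
(For disjoint sets the factorial measure of the rectangle is the product of falling
factorials of the counts.) -/
theorem pascal_factorial_moment_measure
    {Ω : Type*} [MeasurableSpace Ω] (P : Measure Ω) [IsProbabilityMeasure P]
    (α : Measure ℝ) [SigmaFinite α] (p : ℝ) (hp0 : 0 < p) (hp1 : p < 1)
    (ζ : Ω → Measure ℝ)
    (hmeas : ∀ A : Set ℝ, MeasurableSet A → Measurable (fun ω => ζ ω A))
    (hindep : ∀ (N : ℕ) (A : Fin N → Set ℝ), (∀ j, MeasurableSet (A j)) →
      Pairwise (Function.onFun Disjoint A) →
      iIndepFun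
        (fun j ω => ζ ω (A j)) P)
    (hlaw : ∀ A : Set ℝ, MeasurableSet A → 0 < α A → α A < ⊤ → ∀ j : ℕ,
      P {ω | ζ ω A = j} = ENNReal.ofReal
        (risingReal (α A).toReal j * p ^ j * (1 - p) ^ ((α A).toReal) /
          (Nat.factorial j : ℝ)))
    (hzero : ∀ A : Set ℝ, MeasurableSet A → α A = 0 → ∀ᵐ ω ∂P, ζ ω A = 0)
    (hinf : ∀ A : Set ℝ, MeasurableSet A → α A = ⊤ → ∀ᵐ ω ∂P, ζ ω A = ⊤)
    (n N : ℕ) (A : Fin N → Set ℝ) (hA : ∀ j, MeasurableSet (A j))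
    (hdisj : Pairwise (Function.onFun Disjoint A))
    (d : Fin N → ℕ) (hd : ∑ j, d j = n) :
    ∫⁻ ω, ∏ j, fallingENN (ζ ω (A j)) (d j) ∂P
      = (ENNReal.ofReal (p / (1 - p))) ^ n * ∏ j, risingENN (α (A j)) (d j) := by
  have hq : 0 < 1 - p := by linarith
  set q : ℝ≥0∞ := ENNReal.ofReal (p / (1 - p)) with hq_def
  have hqpos : q ≠ 0 := by
    simp only [hq_def, Ne, ENNReal.ofReal_eq_zero, not_le]
    positivity
  -- single-set computation
  have hsingle : ∀ j : Fin N, ∫⁻ ω, fallingENN (ζ ω (A j)) (d j) ∂P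
      = q ^ (d j) * risingENN (α (A j)) (d j) := by
    intro j
    rcases eq_or_ne (α (A j)) 0 with h0 | hne0
    · have hae := hzero _ (hA j) h0
      rw [lintegral_congr_ae (hae.mono fun ω hω => by rw [hω])]
      rw [lintegral_const, measure_univ, mul_one, h0]
      rcases eq_or_ne (d j) 0 with hdj | hdj
      · simp [hdj, fallingENN, risingENN]
      · rw [fallingENN_zero_arg hdj, risingENN_zero_arg hdj, mul_zero]
    rcases eq_or_ne (α (A j)) ⊤ with htop | hnetop
    · have hae := hinf _ (hA j) htop
      rw [lintegral_congr_ae (hae.mono fun ω hω => by rw [hω])]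
      rw [lintegral_const, measure_univ, mul_one, htop]
      rcases eq_or_ne (d j) 0 with hdj | hdj
      · simp [hdj, fallingENN, risingENN]
      · rw [fallingENN_top hdj, risingENN_top hdj,
          ENNReal.mul_top (pow_ne_zero _ hqpos)]
    · have hpos : 0 < α (A j) := pos_iff_ne_zero.2 hne0
      have hlt : α (A j) < ⊤ := lt_top_iff_ne_top.2 hnetop
      have ha : 0 < (α (A j)).toReal := ENNReal.toReal_pos hne0 hnetop
      have := nb_lintegral_falling P hp0 hp1 (hmeas _ (hA j)) ha
        (hlaw _ (hA j) hpos hlt) (d j)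
      rw [this]
      congr 1
      rw [← risingENN_ofReal ha.le, ENNReal.ofReal_toReal hnetop]
  -- independence
  have hF_meas : ∀ j : Fin N, Measurable fun ω => fallingENN (ζ ω (A j)) (d j) :=
    fun j => (measurable_fallingENN (d j)).comp (hmeas _ (hA j))
  have hF_indep : iIndepFun
      (fun j ω => fallingENN (ζ ω (A j)) (d j)) P :=
    (hindep N A hA hdisj).comp (fun j x => fallingENN x (d j))
      (fun j => measurable_fallingENN (d j))
  rw [indep_lintegral_prod hF_meas hF_indep Finset.univ]
  calc ∏ j, ∫⁻ ω, fallingENN (ζ ω (A j)) (d j) ∂P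
      = ∏ j, (q ^ (d j) * risingENN (α (A j)) (d j)) := Finset.prod_congr rfl fun j _ => hsingle j
    _ = (∏ j, q ^ (d j)) * ∏ j, risingENN (α (A j)) (d j) := Finset.prod_mul_distrib
    _ = q ^ n * ∏ j, risingENN (α (A j)) (d j) := by
        rw [Finset.prod_pow_eq_pow_sum, hd]
end
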